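/- For every natural number n, the symmetric Pascal matrix of odd size has eigenvalue 1: det(Q_{2n} − I) = 0, where I is the (2n+1)×(2n+1) identity matrix. -/

import Mathlib

/-!
With `D = diag((-1)^i)`, binomial inversion says that `P D` is an involution, so
`Q - 1 = P Pᵀ - (P D)(P D) = P (Pᵀ D - D P) D`. The middle factor is skew-symmetric, and a
skew-symmetric integer matrix of odd order is singular.
-/

open Matrix

/-- The lower triangular Pascal matrix of size `n+1` over `ℤ`. -/
def pascalL (n : ℕ) : Matrix (Fin (n+1)) (Fin (n+1)) ℤ :=
  Matrix.of fun i j => (Nat.choose i.val j.val : ℤ)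

/-- The symmetric Pascal matrix `Q_n = P_n * P_nᵀ`. -/
def pascalQ (n : ℕ) : Matrix (Fin (n+1)) (Fin (n+1)) ℤ :=
  pascalL n * (pascalL n)ᵀ

open Finset

theorem Int.alternating_sum_range_choose_mul_choose (i j : ℕ) :
    ∑ k ∈ Finset.range (i + 1), (-1) ^ k * (i.choose k * k.choose j : ℤ) =
      if i = j then (-1) ^ i else 0 := by
  rcases lt_or_ge i j with hij | hji
  · rw [if_neg hij.ne, sum_eq_zero]
    intro k hk
    rw [Nat.choose_eq_zero_of_lt ((mem_range_succ_iff.1 hk).trans_lt hij)]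
    simp
  obtain ⟨m, rfl⟩ := Nat.exists_eq_add_of_le hji
  have hlow : ∑ k ∈ Finset.range j, (-1) ^ k * ((j + m).choose k * k.choose j : ℤ) = 0 :=
    sum_eq_zero fun k hk ↦ by simp [Nat.choose_eq_zero_of_lt (mem_range.1 hk)]
  have hfactor (t : ℕ) : (-1) ^ (j + t) * ((j + m).choose (j + t) * (j + t).choose j : ℤ) =
      (-1) ^ j * (j + m).choose j * ((-1) ^ t * m.choose t) := by
    have := Nat.choose_mul (n := j + m) (k := j + t) (s := j) (Nat.le_add_right j t)
    simp only [Nat.add_sub_cancel_left] at this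
    rw [pow_add, ← Nat.cast_mul, this, Nat.cast_mul]
    ring
  rw [add_assoc, sum_range_add, hlow, zero_add, sum_congr rfl fun t _ ↦ hfactor t, ← mul_sum,
    Int.alternating_sum_range_choose]
  rcases eq_or_ne m 0 with rfl | hm
  · simp
  · simp [hm]

theorem Matrix.det_eq_zero_of_transpose_eq_neg {n R : Type*} [Fintype n] [DecidableEq n]
    [CommRing R] [IsAddTorsionFree R] {A : Matrix n n R} (hA : Aᵀ = -A)
    (hn : Odd (Fintype.card n)) : A.det = 0 := by
  have h := congrArg det hA
  rw [det_transpose, det_neg, hn.neg_one_pow, neg_one_mul] at h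
  exact self_eq_neg.1 h

def signDiag (n : ℕ) : Matrix (Fin (n + 1)) (Fin (n + 1)) ℤ :=
  diagonal fun i => (-1) ^ (i : ℕ)

theorem signDiag_mul_self (n : ℕ) : signDiag n * signDiag n = 1 := by
  simp [signDiag, ← pow_add, ← two_mul, pow_mul]

theorem signDiag_transpose (n : ℕ) : (signDiag n)ᵀ = signDiag n :=
  diagonal_transpose _

theorem pascalL_mul_signDiag_mul_self (n : ℕ) :
    pascalL n * signDiag n * (pascalL n * signDiag n) = 1 := by
  ext i j
  have hvanish : ∀ k ∈ range (n + 1), k ∉ range (i + 1) →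
      (-1) ^ k * ((i : ℕ).choose k * k.choose j : ℤ) = 0 := fun k _ hk ↦ by
    rw [Nat.choose_eq_zero_of_lt (by simpa using hk)]
    simp
  have hsum : ∑ k : Fin (n + 1), (-1) ^ (k : ℕ) * ((i : ℕ).choose k * (k : ℕ).choose j : ℤ) =
      if i = j then (-1) ^ (i : ℕ) else 0 := by
    rw [Fin.sum_univ_eq_sum_range (fun k ↦ (-1) ^ k * ((i : ℕ).choose k * k.choose j : ℤ)),
      ← sum_subset (range_subset_range.2 i.isLt) hvanish,
      Int.alternating_sum_range_choose_mul_choose]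
    simp only [Fin.val_inj]
  calc (pascalL n * signDiag n * (pascalL n * signDiag n)) i j
      = (-1) ^ (j : ℕ) * ∑ k : Fin (n + 1), (-1) ^ (k : ℕ) *
          ((i : ℕ).choose k * (k : ℕ).choose j : ℤ) := by
        rw [mul_apply, mul_sum]
        simp only [pascalL, signDiag, mul_diagonal, of_apply]
        exact sum_congr rfl fun k _ ↦ by ring
    _ = (1 : Matrix (Fin (n + 1)) (Fin (n + 1)) ℤ) i j := by
        rw [hsum, one_apply]
        split_ifs with hij
        · simp [hij, ← pow_add, ← two_mul, pow_mul]
        · exact mul_zero _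

/-- The symmetric Pascal matrix of odd size `2n+1` has eigenvalue `1`. -/
theorem det_pascalQ_even_sub_one (n : ℕ) : (pascalQ (2*n) - 1).det = 0 := by
  set P := pascalL (2 * n)
  set D := signDiag (2 * n)
  have hfactor : pascalQ (2 * n) - 1 = P * (Pᵀ * D - D * P) * D :=
    calc pascalQ (2 * n) - 1 = P * Pᵀ * (D * D) - P * D * (P * D) := by
          rw [signDiag_mul_self, pascalL_mul_signDiag_mul_self, mul_one, pascalQ]
      _ = P * (Pᵀ * D - D * P) * D := by noncomm_ring
  have hskew : (Pᵀ * D - D * P)ᵀ = -(Pᵀ * D - D * P) := by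
    rw [transpose_sub, transpose_mul, transpose_mul, transpose_transpose, signDiag_transpose,
      neg_sub]
  have hodd : Odd (Fintype.card (Fin (2 * n + 1))) := by
    rw [Fintype.card_fin]
    exact odd_two_mul_add_one n
  rw [hfactor, det_mul, det_mul, det_eq_zero_of_transpose_eq_neg hskew hodd, mul_zero, zero_mul]
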